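/- arXiv:1002.3447 — 3 statements merged into one kernel-verified Lean document; each statement's English description precedes it below -/
import Mathlib

section
/- Let q ≥ 2 be a prime power and d ≥ 1. Any set of (d+1)(q−1)+1 points in ℝ^d can be partitioned into q pairwise disjoint subsets F_1, F_2, …, F_q such that conv(F_1) ∩ conv(F_2) ∩ … ∩ conv(F_q) ≠ ∅ (Tverberg's theorem for prime powers). -/
/-!
Sarkaria's tensor trick. Lift the points to `bᵢ = (aᵢ, 1)` and pick vectors `w₀, …, w_m ∈ ℝᵐ`,
`m = q - 1`, whose only linear relations are the multiples of `∑ wⱼ = 0`. Each colour class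
`Sᵢ = {bᵢ ⊗ wⱼ}` has `0` in its convex hull, and `(d + 1) m < n`, so Bárány's colourful
Carathéodory theorem gives `∑ λᵢ bᵢ ⊗ w_{f i} = 0`. Hence the vectors `∑_{f i = j} λᵢ bᵢ` do not
depend on `j`: the last coordinate makes all classes carry the same mass `1 / (m + 1)`, and the
remaining coordinates make their centres of mass coincide.

Colourful Carathéodory: take the transversal whose hull `K` is nearest to `0`, with nearest point
`x ≠ 0`. Then `x` lies on the face of `K` cut out by `⟪x, ·⟫ = ‖x‖²`, a hyperplane, so by
Carathéodory one colour `i₀` is superfluous; swapping `c i₀` for a point `y ∈ S i₀` with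
`⟪x, y⟫ ≤ 0` yields a hull strictly closer to `0`.
-/

open Set Finset Module Metric
open scoped RealInnerProductSpace

section ConvexCombination

variable {V : Type*} [AddCommGroup V] [Module ℝ V]

lemma exists_stdSimplex_of_mem_convexHull_range {ι : Type*} [Fintype ι] {v : ι → V} {x : V}
    (hx : x ∈ convexHull ℝ (range v)) : ∃ w ∈ stdSimplex ℝ ι, ∑ i, w i • v i = x := by
  classical
  have hv : range v =
      Fintype.linearCombination ℝ v '' range fun i j => if i = j then (1 : ℝ) else 0 := by
    rw [← range_comp]; congr 1; ext i; simp [Fintype.linearCombination_apply, ite_smul]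
  rw [hv, ← LinearMap.image_convexHull, convexHull_basis_eq_stdSimplex] at hx
  obtain ⟨w, hw, rfl⟩ := hx
  exact ⟨w, hw, by simp [Fintype.linearCombination_apply]⟩

lemma zero_mem_convexHull_range_of_sum_eq_zero {ι : Type*} [Fintype ι] [Nonempty ι] {v : ι → V}
    (hv : ∑ i, v i = 0) : (0 : V) ∈ convexHull ℝ (range v) := by
  have := Finset.centerMass_mem_convexHull univ (w := fun _ => (1 : ℝ)) (z := v)
    (fun _ _ => zero_le_one) (by simpa using Fintype.card_pos) (fun i _ => mem_range_self i)
  simpa [Finset.centerMass, hv] using this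

end ConvexCombination

section NearestPoint

variable {E : Type*} [NormedAddCommGroup E] [InnerProductSpace ℝ E]

lemma norm_sq_le_inner_of_isMinOn {K : Set E} (hK : Convex ℝ K) {x z : E} (hx : x ∈ K)
    (hmin : IsMinOn norm K x) (hz : z ∈ K) : ‖x‖ ^ 2 ≤ ⟪x, z⟫ := by
  have : Nonempty K := ⟨⟨x, hx⟩⟩
  have hinf : ‖0 - x‖ = ⨅ w : K, ‖0 - (w : E)‖ := by
    have hbdd : BddBelow (range fun w : K => ‖0 - (w : E)‖) := ⟨0, by rintro _ ⟨w, rfl⟩; positivity⟩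
    exact le_antisymm (le_ciInf fun w => by simpa using hmin w.2) (ciInf_le hbdd ⟨x, hx⟩)
  have := (norm_eq_iInf_iff_real_inner_le_zero hK hx).1 hinf z hz
  rw [zero_sub, inner_neg_left, inner_sub_right, real_inner_self_eq_norm_sq] at this
  linarith

lemma exists_inner_nonpos_of_zero_mem_convexHull {s : Set E} (hs : (0 : E) ∈ convexHull ℝ s)
    (x : E) : ∃ y ∈ s, ⟪x, y⟫ ≤ 0 := by
  simpa using ((innerₛₗ ℝ x).concaveOn convex_univ).exists_le_of_mem_convexHull (subset_univ s) hs

variable [FiniteDimensional ℝ E]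

lemma exists_mem_convexHull_image_compl_singleton {ι : Type*} [Fintype ι]
    (hι : finrank ℝ E < Fintype.card ι) {v : ι → E} {x : E} (hx0 : x ≠ 0)
    (hx : x ∈ convexHull ℝ (range v)) (hface : ∀ i, ‖x‖ ^ 2 ≤ ⟪x, v i⟫) :
    ∃ i₀, x ∈ convexHull ℝ (v '' {i₀}ᶜ) := by
  obtain ⟨κ, _, z, w, hzv, hz, hw0, hw1, hwx⟩ := eq_pos_convex_span_of_mem_convexHull hx
  choose σ hσ using fun k => hzv (mem_range_self k)
  have hzx : ∀ k, ⟪x, z k⟫ = ‖x‖ ^ 2 := by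
    have hsum : ∑ k, w k * (⟪x, z k⟫ - ‖x‖ ^ 2) = 0 := by
      simp only [mul_sub, Finset.sum_sub_distrib, ← Finset.sum_mul, hw1, one_mul,
        ← real_inner_smul_right, ← inner_sum, hwx, real_inner_self_eq_norm_sq, sub_self]
    have hnn : ∀ k ∈ Finset.univ, 0 ≤ w k * (⟪x, z k⟫ - ‖x‖ ^ 2) := fun k _ =>
      mul_nonneg (hw0 k).le (by rw [← hσ k]; linarith [hface (σ k)])
    intro k
    have := (Finset.sum_eq_zero_iff_of_nonneg hnn).1 hsum k (mem_univ k)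
    linarith [(mul_eq_zero.1 this).resolve_left (hw0 k).ne']
  have hspan : vectorSpan ℝ (range z) ≤ (ℝ ∙ x)ᗮ := by
    rw [vectorSpan_def, Submodule.span_le]
    rintro _ ⟨_, ⟨a, rfl⟩, _, ⟨b, rfl⟩, rfl⟩
    rw [SetLike.mem_coe, Submodule.mem_orthogonal_singleton_iff_inner_right]
    simp only [vsub_eq_sub]
    rw [inner_sub_right, hzx, hzx, sub_self]
  have hcard : Fintype.card κ ≤ finrank ℝ E := by
    have := (ℝ ∙ x).finrank_add_finrank_orthogonal
    rw [finrank_span_singleton hx0] at this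
    linarith [hz.card_le_finrank_succ, Submodule.finrank_mono hspan]
  obtain ⟨i₀, hi₀⟩ : ∃ i₀, i₀ ∉ range σ := by
    by_contra! h
    linarith [Fintype.card_le_of_surjective σ h]
  refine ⟨i₀, hwx ▸ (convex_convexHull ℝ _).sum_mem (fun k _ => (hw0 k).le) hw1 fun k _ => ?_⟩
  exact subset_convexHull ℝ _ ⟨σ k, fun h => hi₀ ⟨k, h⟩, hσ k⟩

theorem colorful_caratheodory_of_innerProductSpace {ι : Type*} [Fintype ι]
    (hι : finrank ℝ E < Fintype.card ι) (S : ι → Finset E) (hS : ∀ i, (0 : E) ∈ convexHull ℝ (S i : Set E)) :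
    ∃ c : ι → E, (∀ i, c i ∈ S i) ∧ (0 : E) ∈ convexHull ℝ (range c) := by
  classical
  have : Nonempty ι := Fintype.card_pos_iff.1 (by omega)
  have : Nonempty (∀ i, S i) := ⟨fun i =>
    ((convexHull_nonempty_iff.1 ⟨0, hS i⟩).to_subtype).some⟩
  obtain ⟨c, hc⟩ := Finite.exists_min fun c : ∀ i, S i =>
    infDist 0 (convexHull ℝ (range fun i => (c i : E)))
  set K := convexHull ℝ (range fun i => (c i : E))
  refine ⟨fun i => c i, fun i => (c i).2, ?_⟩
  obtain ⟨x, hxK, hx⟩ := ((finite_range fun i => (c i : E)).isCompact_convexHull (𝕜 := ℝ))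
    |>.exists_infDist_eq_dist (convexHull_nonempty_iff.2 (range_nonempty _)) (0 : E)
  rw [dist_zero_left] at hx
  by_contra h0
  have hx0 : x ≠ 0 := by rintro rfl; exact h0 hxK
  have hmin : IsMinOn norm K x := fun z hz => by
    have := infDist_le_dist_of_mem (x := (0 : E)) hz
    rwa [hx, dist_zero_left] at this
  obtain ⟨i₀, hxi₀⟩ := exists_mem_convexHull_image_compl_singleton hι hx0 hxK fun i =>
    norm_sq_le_inner_of_isMinOn (convex_convexHull ℝ _) hxK hmin (subset_convexHull ℝ _ ⟨i, rfl⟩)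
  obtain ⟨y, hyS, hy⟩ := exists_inner_nonpos_of_zero_mem_convexHull (hS i₀) x
  set c' := Function.update c i₀ ⟨y, hyS⟩
  set K' := convexHull ℝ (range fun i => (c' i : E))
  have hxK' : x ∈ K' := by
    refine convexHull_mono ?_ hxi₀
    rintro _ ⟨i, hi, rfl⟩
    exact ⟨i, by simp [c', Function.update_of_ne hi]⟩
  have hyK' : y ∈ K' := subset_convexHull ℝ _ ⟨i₀, by simp [c']⟩
  obtain ⟨z, hzK', hz⟩ : ∃ z ∈ K', ‖z‖ < ‖x‖ := by
    by_contra! hnot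
    have := norm_sq_le_inner_of_isMinOn (convex_convexHull ℝ _) hxK' hnot hyK'
    nlinarith [norm_pos_iff.2 hx0]
  have := infDist_le_dist_of_mem (x := (0 : E)) hzK'
  linarith [hc c', dist_zero_left z]

end NearestPoint

section Colorful

variable {V : Type*} [AddCommGroup V] [Module ℝ V] [FiniteDimensional ℝ V]

theorem colorful_caratheodory {ι : Type*} [Fintype ι] (hι : finrank ℝ V < Fintype.card ι)
    (S : ι → Finset V) (hS : ∀ i, (0 : V) ∈ convexHull ℝ (S i : Set V)) :
    ∃ c : ι → V, (∀ i, c i ∈ S i) ∧ (0 : V) ∈ convexHull ℝ (range c) := by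
  classical
  let e : V ≃ₗ[ℝ] EuclideanSpace ℝ (Fin (finrank ℝ V)) :=
    LinearEquiv.ofFinrankEq _ _ (finrank_euclideanSpace_fin).symm
  obtain ⟨c, hcS, hc0⟩ := colorful_caratheodory_of_innerProductSpace (E := EuclideanSpace ℝ _)
    (by rwa [finrank_euclideanSpace_fin]) (fun i => (S i).image e) fun i => by
      rw [coe_image]
      exact e.toLinearMap.image_convexHull (S i : Set V) ▸ ⟨0, hS i, map_zero e⟩
  choose s hs hsc using fun i => Finset.mem_image.1 (hcS i)
  refine ⟨s, hs, ?_⟩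
  have : e.symm '' range c = range s := by
    rw [← range_comp]; congr 1; ext i; simp [← hsc i]
  rw [← this]
  exact e.symm.toLinearMap.image_convexHull (range c) ▸ ⟨0, hc0, map_zero _⟩

end Colorful

section Sarkaria

variable {V : Type*} [AddCommGroup V] [Module ℝ V] {m : ℕ}

/-- `sarkaria j b` is `b ⊗ wⱼ ∈ V ⊗ ℝᵐ ≃ (Fin m → V)`, where `wⱼ = eⱼ` for `j < m` and
`w_m = -(e₀ + ⋯ + e_{m-1})`. -/
def sarkaria (j : Fin (m + 1)) : V →ₗ[ℝ] Fin m → V :=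
  Fin.lastCases (-LinearMap.pi fun _ => LinearMap.id) (fun k => LinearMap.single ℝ (fun _ => V) k) j

lemma sum_sarkaria (u : Fin (m + 1) → V) :
    ∑ j, sarkaria j (u j) = fun k => u k.castSucc - u (Fin.last m) := by
  ext k
  simp [Fin.sum_univ_castSucc, sarkaria, sub_eq_add_neg, Pi.single_apply]

lemma sum_sarkaria_eq_zero_iff (u : Fin (m + 1) → V) :
    ∑ j, sarkaria j (u j) = 0 ↔ ∀ j, u j = u (Fin.last m) := by
  rw [sum_sarkaria, funext_iff, Fin.forall_fin_succ']
  simp [sub_eq_zero]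

lemma nonempty_iInter_convexHull_of_sum_sarkaria_eq_zero {E ι : Type*} [AddCommGroup E]
    [Module ℝ E] [Fintype ι] {a : ι → E} {f : ι → Fin (m + 1)} {w : ι → ℝ}
    (hw0 : ∀ i, 0 ≤ w i) (hw1 : ∑ i, w i = 1)
    (h : ∑ i, w i • sarkaria (f i) (a i, (1 : ℝ)) = 0) :
    (⋂ j, convexHull ℝ (a '' (f ⁻¹' {j}))).Nonempty := by
  classical
  set A : Fin (m + 1) → Finset ι := fun j => univ.filter (f · = j)
  have hbalanced : ∀ j, ∑ i ∈ A j, w i • (a i, (1 : ℝ)) =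
      ∑ i ∈ A (Fin.last m), w i • (a i, (1 : ℝ)) := by
    refine (sum_sarkaria_eq_zero_iff _).1 ?_
    rw [← h, ← Finset.sum_fiberwise univ f]
    refine Finset.sum_congr rfl fun j _ => ?_
    simp only [map_sum, map_smul]
    exact Finset.sum_congr rfl fun i hi => by rw [(Finset.mem_filter.1 hi).2]
  have hmass : ∀ j, ∑ i ∈ A j, w i = ∑ i ∈ A (Fin.last m), w i := fun j => by
    simpa [Prod.snd_sum] using congrArg Prod.snd (hbalanced j)
  have hmoment : ∀ j, ∑ i ∈ A j, w i • a i = ∑ i ∈ A (Fin.last m), w i • a i := fun j => by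
    simpa [Prod.fst_sum] using congrArg Prod.fst (hbalanced j)
  have hpos : 0 < ∑ i ∈ A (Fin.last m), w i := by
    have : ∑ j, ∑ i ∈ A j, w i = 1 := by rw [Finset.sum_fiberwise univ f, hw1]
    simp only [hmass, Finset.sum_const, card_univ, Fintype.card_fin, nsmul_eq_mul] at this
    nlinarith
  refine ⟨(A (Fin.last m)).centerMass w a, mem_iInter.2 fun j => ?_⟩
  rw [Finset.centerMass, ← hmass j, ← hmoment j]
  exact (A j).centerMass_mem_convexHull (fun i _ => hw0 i) (hmass j ▸ hpos)
    fun i hi => ⟨i, (Finset.mem_filter.1 hi).2, rfl⟩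

theorem tverberg {E ι : Type*} [AddCommGroup E] [Module ℝ E] [FiniteDimensional ℝ E] [Fintype ι]
    (m : ℕ) (a : ι → E) (hcard : (finrank ℝ E + 1) * m < Fintype.card ι) :
    ∃ f : ι → Fin (m + 1), (⋂ j, convexHull ℝ (a '' (f ⁻¹' {j}))).Nonempty := by
  classical
  set S : ι → Finset (Fin m → E × ℝ) := fun i => univ.image fun j => sarkaria j (a i, (1 : ℝ))
  have hS : ∀ i, (0 : Fin m → E × ℝ) ∈ convexHull ℝ (S i : Set _) := fun i => by
    rw [coe_image, coe_univ, image_univ]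
    exact zero_mem_convexHull_range_of_sum_eq_zero ((sum_sarkaria_eq_zero_iff _).2 fun _ => rfl)
  have hdim : finrank ℝ (Fin m → E × ℝ) < Fintype.card ι := by
    simpa [Module.finrank_pi_fintype, Module.finrank_prod, mul_comm] using hcard
  obtain ⟨c, hcS, hc0⟩ := colorful_caratheodory hdim S hS
  choose f hf using fun i => by simpa [S] using hcS i
  obtain ⟨w, ⟨hw0, hw1⟩, hwc⟩ := exists_stdSimplex_of_mem_convexHull_range hc0
  exact ⟨f, nonempty_iInter_convexHull_of_sum_sarkaria_eq_zero hw0 hw1 (by simpa [hf] using hwc)⟩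

end Sarkaria

theorem stmt5_general (q d : ℕ) (hq2 : 2 ≤ q)
    (P : Finset (EuclideanSpace ℝ (Fin d))) (hP : P.card = (d + 1) * (q - 1) + 1) :
    ∃ F : Fin q → Set ↥P,
      (∀ i j, i ≠ j → Disjoint (F i) (F j)) ∧
      (⋃ i, F i) = Set.univ ∧
      (⋂ i, convexHull ℝ (Subtype.val '' F i)).Nonempty := by
  obtain ⟨m, rfl⟩ : ∃ m, q = m + 1 := ⟨q - 1, by omega⟩
  obtain ⟨f, hf⟩ := tverberg m (Subtype.val : P → EuclideanSpace ℝ (Fin d))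
    (by simp [hP, finrank_euclideanSpace])
  refine ⟨fun j => f ⁻¹' {j}, fun i j hij => (Set.disjoint_singleton.2 hij).preimage f, ?_, hf⟩
  ext x
  simp

theorem stmt5 (q d : ℕ) (hq : IsPrimePow q) (hq2 : 2 ≤ q) (hd : 1 ≤ d)
    (P : Finset (EuclideanSpace ℝ (Fin d))) (hP : P.card = (d + 1) * (q - 1) + 1) :
    ∃ F : Fin q → Set ↥P,
      (∀ i j, i ≠ j → Disjoint (F i) (F j)) ∧
      (⋃ i, F i) = Set.univ ∧
      (⋂ i, convexHull ℝ (Subtype.val '' F i)).Nonempty :=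
  stmt5_general q d hq2 P hP
end

section
/- Let q ≥ 2, let G be a finite simple graph with more than m vertices, and let S_1, S_2, …, S_m be squids in G □ K_q with pairwise distinct bodies. If q > |N²(v)| + 2|N(v)| for every vertex v of G, then the set V(G □ K_q) ∖ (S_1 ∪ S_2 ∪ … ∪ S_m) is nonempty. -/
/-- The set of vertices at distance exactly two from `v`:
`N²(v) = (⋃ u ∈ N(v), N(u)) \ (N(v) ∪ {v})`. -/
def distTwoSet {V : Type*} (G : SimpleGraph V) (v : V) : Set V :=
  (⋃ u ∈ G.neighborSet v, G.neighborSet u) \ (G.neighborSet v ∪ {v})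

/-- A squid with body `w` in `G □ K_q`: a subset of `V(G) × {1,…,q}` contained either in
`(N_G(v) ∪ N_G(w)) × {i} ∪ {w} × {1,…,q}` for some vertex `v` adjacent to `w` and some
level `i` (type (i)), or in `N_G(w) × {i,j} ∪ {w} × {1,…,q}` for some levels `i < j`
(type (ii)). -/
def IsSquid {V : Type*} (G : SimpleGraph V) (q : ℕ) (w : V) (S : Set (V × Fin q)) : Prop :=
  (∃ v, G.Adj v w ∧ ∃ i : Fin q,
    S ⊆ ((G.neighborSet v ∪ G.neighborSet w) ×ˢ {i}) ∪ ({w} ×ˢ (Set.univ : Set (Fin q)))) ∨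
  (∃ i j : Fin q, i < j ∧
    S ⊆ (G.neighborSet w ×ˢ ({i, j} : Set (Fin q))) ∪ ({w} ×ˢ (Set.univ : Set (Fin q))))

/-!
Choose a vertex `u` that is not a body; it exists because there are fewer than `|V|` bodies.
A squid with body `w ≠ u` meets the column `{u} × {1,…,q}` in at most two points when `u ∈ N(w)`,
in at most one point when `w ∈ N²(u)` (through a type (i) squid whose `v` is a common
neighbour), and nowhere otherwise. As the bodies are distinct, the squids cover at most
`2|N(u)| + |N²(u)| < q` points of the column.
-/

lemma Set.sum_indicator_one_comp_le_ncard {ι α : Type*} [Fintype ι] [Finite α] {f : ι → α}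
    (hf : f.Injective) (s : Set α) : ∑ k, s.indicator (1 : α → ℕ) (f k) ≤ s.ncard := by
  classical
  calc ∑ k, s.indicator (1 : α → ℕ) (f k) = (f ⁻¹' s).ncard := by
        simp [Set.indicator_apply, Finset.sum_boole, ← Set.ncard_coe_finset, Set.preimage]
    _ ≤ s.ncard := Set.ncard_le_ncard_of_injOn f (fun _ h => h) hf.injOn s.toFinite

lemma Set.mem_of_mem_of_subset_prod_union_singleton_prod {α β : Type*} {S : Set (α × β)}
    {A : Set α} {B : Set β} {a b : α} {i : β} (h : S ⊆ A ×ˢ B ∪ {b} ×ˢ Set.univ) (hab : a ≠ b)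
    (hi : (a, i) ∈ S) : a ∈ A ∧ i ∈ B :=
  (h hi).resolve_right fun h' => hab h'.1

lemma SimpleGraph.mem_distTwoSet_of_adj_of_adj {V : Type*} (G : SimpleGraph V) {u v w : V}
    (huv : G.Adj u v) (hvw : G.Adj v w) (huw : ¬ G.Adj u w) (hne : u ≠ w) :
    w ∈ distTwoSet G u :=
  ⟨Set.mem_biUnion huv hvw, by rintro (h | h); exacts [huw h, hne h.symm]⟩

lemma IsSquid.ncard_fiber_le {V : Type*} {G : SimpleGraph V} {q : ℕ} {u w : V}
    {S : Set (V × Fin q)} (hS : IsSquid G q w S) (hu : u ≠ w) :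
    {i | (u, i) ∈ S}.ncard ≤
      2 * (G.neighborSet u).indicator 1 w + (distTwoSet G u).indicator 1 w := by
  rcases {i | (u, i) ∈ S}.eq_empty_or_nonempty with hempty | ⟨i₀, hi₀⟩
  · simp [hempty]
  rcases hS with ⟨v, hvw, i, hsub⟩ | ⟨i, j, hij, hsub⟩
  · have hcard : {i | (u, i) ∈ S}.ncard ≤ 1 :=
      (Set.ncard_le_ncard fun _ hk =>
        (Set.mem_of_mem_of_subset_prod_union_singleton_prod hsub hu hk).2).trans
        (Set.ncard_singleton i).le
    by_cases huw : G.Adj u w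
    · simp [huw]
      omega
    obtain ⟨hvu | hwu, -⟩ := Set.mem_of_mem_of_subset_prod_union_singleton_prod hsub hu hi₀
    · have hdist := G.mem_distTwoSet_of_adj_of_adj (G.adj_symm hvu) hvw huw hu
      simpa [huw, hdist] using hcard
    · exact absurd (G.adj_symm hwu) huw
  · have hcard : {i | (u, i) ∈ S}.ncard ≤ 2 :=
      (Set.ncard_le_ncard fun _ hk =>
        (Set.mem_of_mem_of_subset_prod_union_singleton_prod hsub hu hk).2).trans
        (Set.ncard_pair hij.ne).le
    have huw : G.Adj u w :=
      G.adj_symm (Set.mem_of_mem_of_subset_prod_union_singleton_prod hsub hu hi₀).1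
    simp [huw]
    omega

lemma ncard_fiber_iUnion_squids_le {V ι : Type*} [Finite V] [Fintype ι] {G : SimpleGraph V}
    {q : ℕ} {w : ι → V} (hw : w.Injective) {S : ι → Set (V × Fin q)}
    (hS : ∀ k, IsSquid G q (w k) (S k)) {u : V} (hu : u ∉ Set.range w) :
    {i | (u, i) ∈ ⋃ k, S k}.ncard ≤ 2 * (G.neighborSet u).ncard + (distTwoSet G u).ncard :=
  calc {i | (u, i) ∈ ⋃ k, S k}.ncard = (⋃ k, {i | (u, i) ∈ S k}).ncard := by
        congr 1; ext; simp
    _ ≤ ∑ k, {i | (u, i) ∈ S k}.ncard := Set.ncard_iUnion_le_of_fintype _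
    _ ≤ ∑ k, (2 * (G.neighborSet u).indicator 1 (w k) + (distTwoSet G u).indicator 1 (w k)) :=
        Finset.sum_le_sum fun k _ => (hS k).ncard_fiber_le fun h => hu ⟨k, h.symm⟩
    _ = 2 * ∑ k, (G.neighborSet u).indicator 1 (w k) + ∑ k, (distTwoSet G u).indicator 1 (w k) := by
        rw [Finset.sum_add_distrib, Finset.mul_sum]
    _ ≤ 2 * (G.neighborSet u).ncard + (distTwoSet G u).ncard := by
        gcongr <;> exact Set.sum_indicator_one_comp_le_ncard hw _

theorem stmt9_general {V : Type*} [Fintype V] (G : SimpleGraph V) (q m : ℕ)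
    (hm : m < Fintype.card V)
    (w : Fin m → V) (S : Fin m → Set (V × Fin q))
    (hw : Function.Injective w)
    (hS : ∀ k, IsSquid G q (w k) (S k))
    (hdeg : ∀ v, (distTwoSet G v).ncard + 2 * (G.neighborSet v).ncard < q) :
    ((Set.univ : Set (V × Fin q)) \ ⋃ k, S k).Nonempty := by
  obtain ⟨u, hu⟩ : ∃ u, u ∉ Set.range w := by
    by_contra! h
    have := Fintype.card_le_of_surjective w h
    rw [Fintype.card_fin] at this
    omega
  have hfiber := ncard_fiber_iUnion_squids_le hw hS hu
  obtain ⟨i, hi⟩ : {i | (u, i) ∈ ⋃ k, S k}ᶜ.Nonempty := by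
    rw [Set.nonempty_compl]
    intro h
    rw [h, Set.ncard_univ, Nat.card_eq_fintype_card, Fintype.card_fin] at hfiber
    linarith [hdeg u]
  exact ⟨(u, i), Set.mem_univ _, hi⟩

theorem stmt9 {V : Type*} [Fintype V] (G : SimpleGraph V) (q m : ℕ) (hq : 2 ≤ q)
    (hm : m < Fintype.card V)
    (w : Fin m → V) (S : Fin m → Set (V × Fin q))
    (hw : Function.Injective w)
    (hS : ∀ k, IsSquid G q (w k) (S k))
    (hdeg : ∀ v, (distTwoSet G v).ncard + 2 * (G.neighborSet v).ncard < q) :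
    ((Set.univ : Set (V × Fin q)) \ ⋃ k, S k).Nonempty :=
  stmt9_general G q m hm w S hw hS hdeg
end

section
/- Let G be a finite simple graph with more than m vertices, let q ≥ 2 satisfy q > |N²(v)| + 2|N(v)| for every vertex v of G, let S_1, …, S_m be squids in G □ K_q with pairwise distinct bodies, and let v be a vertex of G that is not the body of any S_k. Suppose that among the squids S_1, …, S_m having at least one arm of the form (v, ·) there are a squids of type (i) whose body is not adjacent to v, b squids of type (i) whose body is adjacent to v, and c squids of type (ii). Then a + b + 2c ≤ |N²(v)| + 2|N(v)| < q; in particular the set {(v,1), (v,2), …, (v,q)} ∖ (S_1 ∪ … ∪ S_m) is nonempty. -/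
/-- A squid of type (i) with body `w` in `G □ K_q`: a subset of
`(N_G(v) ∪ N_G(w)) × {i} ∪ {w} × {1,…,q}` for some vertex `v` adjacent to `w`
and some level `i`. -/
def IsSquidI {V : Type*} (G : SimpleGraph V) (q : ℕ) (w : V) (S : Set (V × Fin q)) : Prop :=
  ∃ v, G.Adj v w ∧ ∃ i : Fin q,
    S ⊆ ((G.neighborSet v ∪ G.neighborSet w) ×ˢ {i}) ∪ ({w} ×ˢ (Set.univ : Set (Fin q)))

/-- A squid of type (ii) with body `w` in `G □ K_q`: a subset of
`N_G(w) × {i,j} ∪ {w} × {1,…,q}` for some levels `i < j`. -/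
def IsSquidII {V : Type*} (G : SimpleGraph V) (q : ℕ) (w : V) (S : Set (V × Fin q)) : Prop :=
  ∃ i j : Fin q, i < j ∧
    S ⊆ (G.neighborSet w ×ˢ ({i, j} : Set (Fin q))) ∪ ({w} ×ˢ (Set.univ : Set (Fin q)))

/-!
A squid whose body is not `v` meets the column `{v} × Fin q` only in arms, and these lie on one
level (type (i)) or on two levels (type (ii)); hence the squids cover at most `a + b + 2c` levels
of `v`. The bodies of the squids with an arm at `v` are distinct: those of type (ii) and the
adjacent ones of type (i) are neighbours of `v`, the others of type (i) are at distance two, so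
`a ≤ |N²(v)|` and `b + c ≤ |N(v)|`.
-/

section

open Function Set

theorem Set.ncard_iUnion_le_sum_ncard {ι α : Type*} [Fintype ι] [Finite α] (P : ι → Set α) :
    (⋃ i, P i).ncard ≤ ∑ i, (P i).ncard := by
  classical
  have := Fintype.ofFinite α
  simp only [ncard_eq_toFinset_card', toFinset_iUnion]
  exact Finset.card_biUnion_le

theorem Finset.sum_ite_mem_eq_ncard {ι : Type*} [Fintype ι] (A : Set ι) [DecidablePred (· ∈ A)] :
    ∑ i, (if i ∈ A then 1 else 0) = A.ncard := by
  rw [Finset.sum_boole, Nat.cast_id, ← ncard_coe_finset]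
  congr
  ext
  simp

variable {V : Type*} {G : SimpleGraph V} {q : ℕ} {w x : V} {S : Set (V × Fin q)}

namespace IsSquidI

theorem ncard_preimage_le_one (h : IsSquidI G q w S) (hx : x ≠ w) :
    (Prod.mk x ⁻¹' S).ncard ≤ 1 := by
  obtain ⟨u, -, i, hsub⟩ := h
  have hi : Prod.mk x ⁻¹' S ⊆ {i} := fun j hj => by
    rcases hsub hj with hj | hj
    · exact hj.2
    · exact absurd hj.1 hx
  simpa using ncard_le_ncard hi

theorem adj_or_mem_distTwoSet (h : IsSquidI G q w S) (hx : x ≠ w)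
    (harm : (Prod.mk x ⁻¹' S).Nonempty) : G.Adj w x ∨ w ∈ distTwoSet G x := by
  obtain ⟨u, huw, i, hsub⟩ := h
  obtain ⟨j, hj⟩ := harm
  rcases hsub hj with ⟨hxu | hxw, -⟩ | ⟨hxw, -⟩
  · by_cases hwx : G.Adj w x
    · exact .inl hwx
    · refine .inr ⟨mem_biUnion (G.adj_symm hxu) huw, ?_⟩
      rintro (hwx' | rfl)
      · exact hwx (G.adj_symm hwx')
      · exact hx rfl
  · exact .inl hxw
  · exact absurd hxw hx

end IsSquidI

namespace IsSquidII

theorem ncard_preimage_le_two (h : IsSquidII G q w S) (hx : x ≠ w) :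
    (Prod.mk x ⁻¹' S).ncard ≤ 2 := by
  obtain ⟨i, j, -, hsub⟩ := h
  have hij : Prod.mk x ⁻¹' S ⊆ {i, j} := fun l hl => by
    rcases hsub hl with hl | hl
    · exact hl.2
    · exact absurd hl.1 hx
  calc (Prod.mk x ⁻¹' S).ncard ≤ ({i, j} : Set (Fin q)).ncard := ncard_le_ncard hij
    _ ≤ ({j} : Set (Fin q)).ncard + 1 := ncard_insert_le i {j}
    _ = 2 := by rw [ncard_singleton]

theorem adj (h : IsSquidII G q w S) (hx : x ≠ w) (harm : (Prod.mk x ⁻¹' S).Nonempty) :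
    G.Adj w x := by
  obtain ⟨i, j, -, hsub⟩ := h
  obtain ⟨l, hl⟩ := harm
  rcases hsub hl with ⟨hxw, -⟩ | ⟨hxw, -⟩
  · exact hxw
  · exact absurd hxw hx

end IsSquidII

section ArmsAtVertex

variable {ι : Type*} {w : ι → V} {S : ι → Set (V × Fin q)} {typeI : ι → Prop} {v : V}

theorem ncard_typeI_arms_nonadj_le [Finite V] [Finite ι] (hw : Injective w)
    (hS : ∀ k, typeI k → IsSquidI G q (w k) (S k)) (hv : ∀ k, w k ≠ v) :
    {k | (∃ j, (v, j) ∈ S k) ∧ typeI k ∧ ¬ G.Adj (w k) v}.ncard ≤ (distTwoSet G v).ncard := by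
  refine ncard_le_ncard_of_injOn w (fun k ⟨harm, hI, hnadj⟩ => ?_) hw.injOn
  exact ((hS k hI).adj_or_mem_distTwoSet (hv k).symm harm).resolve_left hnadj

theorem ncard_typeI_arms_adj_add_ncard_typeII_arms_le [Finite V] [Finite ι] (hw : Injective w)
    (hS : ∀ k, ¬ typeI k → IsSquidII G q (w k) (S k)) (hv : ∀ k, w k ≠ v) :
    {k | (∃ j, (v, j) ∈ S k) ∧ typeI k ∧ G.Adj (w k) v}.ncard +
      {k | (∃ j, (v, j) ∈ S k) ∧ ¬ typeI k}.ncard ≤ (G.neighborSet v).ncard := by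
  have hdisj : Disjoint {k | (∃ j, (v, j) ∈ S k) ∧ typeI k ∧ G.Adj (w k) v}
      {k | (∃ j, (v, j) ∈ S k) ∧ ¬ typeI k} :=
    disjoint_left.2 fun k hB hC => hC.2 hB.2.1
  rw [← ncard_union_eq hdisj]
  refine ncard_le_ncard_of_injOn w (fun k hk => ?_) hw.injOn
  rcases hk with ⟨-, -, hadj⟩ | ⟨harm, hII⟩
  · exact G.adj_symm hadj
  · exact G.adj_symm ((hS k hII).adj (hv k).symm harm)

theorem ncard_iUnion_arms_le [Fintype ι]
    (hS : ∀ k, (typeI k → IsSquidI G q (w k) (S k)) ∧ (¬ typeI k → IsSquidII G q (w k) (S k)))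
    (hv : ∀ k, w k ≠ v) :
    (⋃ k, Prod.mk v ⁻¹' S k).ncard ≤
      {k | (∃ j, (v, j) ∈ S k) ∧ typeI k ∧ ¬ G.Adj (w k) v}.ncard +
      {k | (∃ j, (v, j) ∈ S k) ∧ typeI k ∧ G.Adj (w k) v}.ncard +
      2 * {k | (∃ j, (v, j) ∈ S k) ∧ ¬ typeI k}.ncard := by
  classical
  set A := {k | (∃ j, (v, j) ∈ S k) ∧ typeI k ∧ ¬ G.Adj (w k) v}
  set B := {k | (∃ j, (v, j) ∈ S k) ∧ typeI k ∧ G.Adj (w k) v}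
  set C := {k | (∃ j, (v, j) ∈ S k) ∧ ¬ typeI k}
  have hk (k : ι) : (Prod.mk v ⁻¹' S k).ncard ≤
      (if k ∈ A then 1 else 0) + (if k ∈ B then 1 else 0) + 2 * (if k ∈ C then 1 else 0) := by
    by_cases harm : ∃ j, (v, j) ∈ S k
    · by_cases hI : typeI k
      · have := ((hS k).1 hI).ncard_preimage_le_one (hv k).symm
        by_cases hadj : G.Adj (w k) v <;> simpa [A, B, C, harm, hI, hadj]
      · have := ((hS k).2 hI).ncard_preimage_le_two (hv k).symm
        simpa [A, B, C, harm, hI]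
    · simp [(not_nonempty_iff_eq_empty (s := Prod.mk v ⁻¹' S k)).1 harm]
  calc (⋃ k, Prod.mk v ⁻¹' S k).ncard ≤ ∑ k, (Prod.mk v ⁻¹' S k).ncard :=
        ncard_iUnion_le_sum_ncard _
    _ ≤ _ := Finset.sum_le_sum fun k _ => hk k
    _ = A.ncard + B.ncard + 2 * C.ncard := by
      rw [Finset.sum_add_distrib, Finset.sum_add_distrib, ← Finset.mul_sum,
        Finset.sum_ite_mem_eq_ncard, Finset.sum_ite_mem_eq_ncard, Finset.sum_ite_mem_eq_ncard]

end ArmsAtVertex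

end

theorem stmt12_general {V : Type*} [Fintype V] (G : SimpleGraph V) (q m : ℕ)
    (w : Fin m → V) (S : Fin m → Set (V × Fin q))
    (hw : Function.Injective w)
    (typeI : Fin m → Prop)
    (hS : ∀ k, (typeI k → IsSquidI G q (w k) (S k)) ∧
               (¬ typeI k → IsSquidII G q (w k) (S k)))
    (hdeg : ∀ v', (distTwoSet G v').ncard + 2 * (G.neighborSet v').ncard < q)
    (v : V) (hv : ∀ k, w k ≠ v)
    (a b c : ℕ)
    (ha : a = {k : Fin m | (∃ j, (v, j) ∈ S k) ∧ typeI k ∧ ¬ G.Adj (w k) v}.ncard)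
    (hb : b = {k : Fin m | (∃ j, (v, j) ∈ S k) ∧ typeI k ∧ G.Adj (w k) v}.ncard)
    (hc : c = {k : Fin m | (∃ j, (v, j) ∈ S k) ∧ ¬ typeI k}.ncard) :
    (a + b + 2 * c ≤ (distTwoSet G v).ncard + 2 * (G.neighborSet v).ncard ∧
      (distTwoSet G v).ncard + 2 * (G.neighborSet v).ncard < q) ∧
    (({v} ×ˢ (Set.univ : Set (Fin q))) \ ⋃ k, S k).Nonempty := by
  have hcount : a + b + 2 * c ≤ (distTwoSet G v).ncard + 2 * (G.neighborSet v).ncard := by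
    have hA := ncard_typeI_arms_nonadj_le hw (fun k => (hS k).1) hv
    have hBC := ncard_typeI_arms_adj_add_ncard_typeII_arms_le hw (fun k => (hS k).2) hv
    omega
  refine ⟨⟨hcount, hdeg v⟩, ?_⟩
  by_contra hcover
  rw [Set.not_nonempty_iff_eq_empty, Set.sdiff_eq_empty] at hcover
  have hlevels : (Set.univ : Set (Fin q)) ⊆ ⋃ k, Prod.mk v ⁻¹' S k := fun j _ => by
    simpa using hcover (Set.mk_mem_prod rfl (Set.mem_univ j))
  have hq : q ≤ a + b + 2 * c := by
    simpa [ha, hb, hc] using (Set.ncard_le_ncard hlevels).trans (ncard_iUnion_arms_le hS hv)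
  exact (hq.trans hcount).not_gt (hdeg v)

theorem stmt12 {V : Type*} [Fintype V] (G : SimpleGraph V) (q m : ℕ) (hq : 2 ≤ q)
    (hm : m < Fintype.card V)
    (w : Fin m → V) (S : Fin m → Set (V × Fin q))
    (hw : Function.Injective w)
    (typeI : Fin m → Prop)
    (hS : ∀ k, (typeI k → IsSquidI G q (w k) (S k)) ∧
               (¬ typeI k → IsSquidII G q (w k) (S k)))
    (hdeg : ∀ v', (distTwoSet G v').ncard + 2 * (G.neighborSet v').ncard < q)
    (v : V) (hv : ∀ k, w k ≠ v)
    (a b c : ℕ)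
    (ha : a = {k : Fin m | (∃ j, (v, j) ∈ S k) ∧ typeI k ∧ ¬ G.Adj (w k) v}.ncard)
    (hb : b = {k : Fin m | (∃ j, (v, j) ∈ S k) ∧ typeI k ∧ G.Adj (w k) v}.ncard)
    (hc : c = {k : Fin m | (∃ j, (v, j) ∈ S k) ∧ ¬ typeI k}.ncard) :
    (a + b + 2 * c ≤ (distTwoSet G v).ncard + 2 * (G.neighborSet v).ncard ∧
      (distTwoSet G v).ncard + 2 * (G.neighborSet v).ncard < q) ∧
    (({v} ×ˢ (Set.univ : Set (Fin q))) \ ⋃ k, S k).Nonempty :=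
  stmt12_general G q m w S hw typeI hS hdeg v hv a b c ha hb hc
end
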